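/- Let μ be a measure on (0,∞) with ∫ min{r,1} μ(dr) < ∞ and f(λ) = ∫_{(0,∞)} (1 − e^{−λ r}) μ(dr). If there exist c > 0 and δ > 0 such that f(r) ≤ c r^δ for all r ≥ 1, then ∫_{(0,1)} r^{δ+ε} μ(dr) < ∞ for every ε > 0. -/

import Mathlib

/-!
For `r > 1/λ` the integrand satisfies `1 - e^{-λr} ≥ 1 - e⁻¹`, so Markov's inequality turns the
growth bound `f(λ) ≤ c λ^δ` into the tail bound `μ (t, ∞) ≤ C t^{-δ}` for `0 < t < 1`.
The layer-cake formula `∫_{(0,1)} r^p dμ = p ∫₀^∞ t^{p-1} μ((t,∞) ∩ (0,1)) dt` then bounds the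
moment by `C p ∫₀¹ t^{p-1-δ} dt`, which is finite because `p = δ + ε > δ`.
-/

open MeasureTheory Set Real
open scoped ENNReal

theorem one_sub_exp_neg_mul_le_mul_min {l : ℝ} (hl : 1 ≤ l) (r : ℝ) :
    1 - exp (-(l * r)) ≤ l * min r 1 := by
  have hlin : 1 - exp (-(l * r)) ≤ l * r := by linarith [add_one_le_exp (-(l * r))]
  have hone : 1 - exp (-(l * r)) ≤ 1 := by linarith [exp_pos (-(l * r))]
  rcases le_total r 1 with h | h
  · rwa [min_eq_left h]
  · rw [min_eq_right h, mul_one]; linarith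

theorem integrable_one_sub_exp_neg_mul {μ : Measure ℝ} (hμ0 : ∀ᵐ r ∂μ, 0 ≤ r)
    (hμ : ∫⁻ r, ENNReal.ofReal (min r 1) ∂μ < ∞) {l : ℝ} (hl : 1 ≤ l) :
    Integrable (fun r => 1 - exp (-(l * r))) μ := by
  have hmin : Integrable (fun r => min r 1) μ :=
    ⟨by fun_prop, (hasFiniteIntegral_iff_ofReal (hμ0.mono fun r hr => le_min hr zero_le_one)).2 hμ⟩
  refine (hmin.const_mul l).mono' (by fun_prop) ?_
  filter_upwards [hμ0] with r hr
  have : exp (-(l * r)) ≤ 1 := exp_le_one_iff.2 (by nlinarith)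
  rw [norm_of_nonneg (by linarith)]
  exact one_sub_exp_neg_mul_le_mul_min hl r

theorem mul_measure_Ioi_inv_le_lintegral_one_sub_exp (μ : Measure ℝ) {l : ℝ} (hl : 0 < l) :
    ENNReal.ofReal (1 - exp (-1)) * μ (Ioi l⁻¹) ≤
      ∫⁻ r, ENNReal.ofReal (1 - exp (-(l * r))) ∂μ := by
  calc ENNReal.ofReal (1 - exp (-1)) * μ (Ioi l⁻¹)
      ≤ ENNReal.ofReal (1 - exp (-1)) *
          μ {r | ENNReal.ofReal (1 - exp (-1)) ≤ ENNReal.ofReal (1 - exp (-(l * r)))} := by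
        gcongr
        intro r hr
        have : 1 < l * r := by rwa [mem_Ioi, inv_lt_iff_one_lt_mul₀' hl] at hr
        exact ENNReal.ofReal_le_ofReal (by gcongr)
    _ ≤ ∫⁻ r, ENNReal.ofReal (1 - exp (-(l * r))) ∂μ :=
        mul_meas_ge_le_lintegral₀ (by fun_prop) _

theorem setLIntegral_Ioo_rpow_lt_top_of_measure_Ioi_le {μ : Measure ℝ} {C δ p : ℝ}
    (hp : 0 < p) (hδp : δ < p)
    (hμ : ∀ t, 0 < t → t < 1 → μ (Ioi t) ≤ ENNReal.ofReal (C * t ^ (-δ))) :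
    ∫⁻ r in Ioo 0 1, ENNReal.ofReal (r ^ p) ∂μ < ∞ := by
  have hnn : 0 ≤ᵐ[μ.restrict (Ioo 0 1)] id :=
    ae_restrict_of_forall_mem measurableSet_Ioo fun r hr => hr.1.le
  rw [show ∫⁻ r in Ioo 0 1, ENNReal.ofReal (r ^ p) ∂μ =
      ∫⁻ r, ENNReal.ofReal (id r ^ p) ∂μ.restrict (Ioo 0 1) from rfl,
    lintegral_rpow_eq_lintegral_meas_lt_mul _ hnn aemeasurable_id hp]
  refine ENNReal.mul_lt_top ENNReal.ofReal_lt_top ?_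
  have htail : ∀ t ∈ Ioi (0 : ℝ),
      μ.restrict (Ioo 0 1) {r | t < id r} * ENNReal.ofReal (t ^ (p - 1)) ≤
        (Iio 1).indicator (fun t => ENNReal.ofReal (C * t ^ (p - 1 - δ))) t := by
    intro t ht
    rw [Measure.restrict_apply' measurableSet_Ioo]
    by_cases ht1 : t < 1
    · rw [indicator_of_mem (mem_Iio.2 ht1), show p - 1 - δ = -δ + (p - 1) by ring, rpow_add ht,
        ← mul_assoc, ENNReal.ofReal_mul' (rpow_nonneg ht.le _)]
      gcongr
      exact (measure_mono fun r hr => hr.1).trans (hμ t ht ht1)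
    · have hempty : {r : ℝ | t < id r} ∩ Ioo 0 1 = ∅ :=
        eq_empty_of_forall_notMem fun r hr => ht1 (hr.1.trans hr.2.2)
      rw [hempty, measure_empty, zero_mul]
      exact bot_le
  calc ∫⁻ t in Ioi 0, μ.restrict (Ioo 0 1) {r | t < id r} * ENNReal.ofReal (t ^ (p - 1))
      ≤ ∫⁻ t in Ioi 0, (Iio 1).indicator (fun t => ENNReal.ofReal (C * t ^ (p - 1 - δ))) t :=
        setLIntegral_mono' measurableSet_Ioi htail
    _ = ∫⁻ t in Ioo 0 1, ENNReal.ofReal (C * t ^ (p - 1 - δ)) := by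
        rw [lintegral_indicator measurableSet_Iio, Measure.restrict_restrict measurableSet_Iio,
          Iio_inter_Ioi]
    _ < ∞ := by
        have hint : IntegrableOn (fun t : ℝ => t ^ (p - 1 - δ)) (Ioo 0 1) :=
          (intervalIntegral.integrableOn_Ioo_rpow_iff one_pos).2 (by linarith)
        exact IntegrableOn.setLIntegral_lt_top (hint.const_mul C)

theorem bernstein_moment_at_zero_general
    (μ : Measure ℝ) (hμsupp : μ (Set.Iic 0) = 0)
    (hμint : (∫⁻ r, ENNReal.ofReal (min r 1) ∂μ) < ∞)
    (c δ : ℝ) (hδ : 0 < δ)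
    (hf : ∀ l : ℝ, 1 ≤ l → (∫ r, (1 - Real.exp (-(l * r))) ∂μ) ≤ c * l ^ δ)
    (ε : ℝ) (hε : 0 < ε) :
    (∫⁻ r in Set.Ioo (0:ℝ) 1, ENNReal.ofReal (r ^ (δ + ε)) ∂μ) < ∞ := by
  have hμ0 : ∀ᵐ r ∂μ, 0 ≤ r := by
    simp only [ae_iff, not_le]
    exact measure_mono_null Iio_subset_Iic_self hμsupp
  have hκ : 0 < 1 - exp (-1) := by linarith [exp_neg_one_lt_half]
  refine setLIntegral_Ioo_rpow_lt_top_of_measure_Ioi_le (C := c / (1 - exp (-1))) (δ := δ)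
    (p := δ + ε) (by linarith) (by linarith) fun t ht0 ht1 => ?_
  have hl : 1 ≤ t⁻¹ := (one_le_inv₀ ht0).2 ht1.le
  have hnonneg : 0 ≤ᵐ[μ] fun r => 1 - exp (-(t⁻¹ * r)) := hμ0.mono fun r hr => by
    simpa using exp_le_one_iff.2 (neg_nonpos.2 (mul_nonneg (inv_nonneg.2 ht0.le) hr))
  have key := mul_measure_Ioi_inv_le_lintegral_one_sub_exp μ (inv_pos.2 ht0)
  rw [inv_inv, ← ofReal_integral_eq_lintegral_ofReal
    (integrable_one_sub_exp_neg_mul hμ0 hμint hl) hnonneg] at key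
  calc μ (Ioi t) ≤ ENNReal.ofReal (c * t⁻¹ ^ δ) / ENNReal.ofReal (1 - exp (-1)) := by
        rw [ENNReal.le_div_iff_mul_le (Or.inl (by positivity)) (Or.inl ENNReal.ofReal_ne_top),
          mul_comm]
        exact key.trans (ENNReal.ofReal_le_ofReal (hf _ hl))
    _ = ENNReal.ofReal (c / (1 - exp (-1)) * t ^ (-δ)) := by
        rw [← ENNReal.ofReal_div_of_pos hκ, inv_rpow ht0.le, ← rpow_neg ht0.le, div_mul_eq_mul_div]

/-- **Lemma 5.1(ii)(a).** If the Bernstein function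
`f(λ) = ∫ (1 - e^{-λr}) μ(dr)` satisfies `f(r) ≤ c r^δ` for `r ≥ 1`, then
`∫_{(0,1)} r^{δ+ε} μ(dr) < ∞` for every `ε > 0`. -/
theorem bernstein_moment_at_zero
    (μ : Measure ℝ) (hμsupp : μ (Set.Iic 0) = 0)
    (hμint : (∫⁻ r, ENNReal.ofReal (min r 1) ∂μ) < ∞)
    (c δ : ℝ) (hc : 0 < c) (hδ : 0 < δ)
    (hf : ∀ l : ℝ, 1 ≤ l → (∫ r, (1 - Real.exp (-(l * r))) ∂μ) ≤ c * l ^ δ)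
    (ε : ℝ) (hε : 0 < ε) :
    (∫⁻ r in Set.Ioo (0:ℝ) 1, ENNReal.ofReal (r ^ (δ + ε)) ∂μ) < ∞ :=
  bernstein_moment_at_zero_general μ hμsupp hμint c δ hδ hf ε hε
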